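/- arXiv:1611.02463 — 2 statements merged into one kernel-verified Lean document; each statement's English description precedes it below -/
import Mathlib

section
/- Let p, q be a pair of prototype pulses of length 2Mκ meeting the perfect reconstruction conditions, i.e., U⁻𝒮(p,q) = 0 and U⁺ℛ(p,q) equals the matrix that is zero everywhere except its central column which is all ones. Let r and s be pulses of length 2Mκ, one symmetric and the other anti-symmetric in the time domain (i.e., r[n] = r[2Mκ−n+1] and s[n] = −s[2Mκ−n+1], or vice versa). Then η±(p,q,r,s) = (1/(2M)) Σ_{n=1}^{2Mκ} r[n] s[2Mκ−n+1] = 0. -/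
open Matrix Finset

/-- The `n × n` exchange (anti-identity) matrix `J_n`. -/
def Jmat (n : ℕ) : Matrix (Fin n) (Fin n) ℝ :=
  fun i j => if (i : ℕ) + (j : ℕ) = n - 1 then 1 else 0

/-- Row-wise convolution: each row of `A` convolved with the corresponding row of `B`,
producing rows of length `2κ − 1`. -/
def rowConv {m κ : ℕ} (A B : Matrix (Fin m) (Fin κ) ℝ) :
    Matrix (Fin m) (Fin (2 * κ - 1)) ℝ :=
  fun i k => ∑ a : Fin κ, ∑ b : Fin κ,
    if (a : ℕ) + (b : ℕ) = (k : ℕ) then A i a * B i b else 0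

/-- The matrix `J₂ ⊗ I_M`, acting on `2M` rows by swapping the two halves. -/
def swapHalves (M : ℕ) : Matrix (Fin (2 * M)) (Fin (2 * M)) ℝ :=
  fun i j => if ((i : ℕ) + M) % (2 * M) = (j : ℕ) then 1 else 0

/-- The matrix `U^ε = I₂ ⊗ (I_M + ε J_M)` (for `ε = 1` this is `U⁺`, for `ε = -1` it is `U⁻`). -/
def Umat (M : ℕ) (ε : ℝ) : Matrix (Fin (2 * M)) (Fin (2 * M)) ℝ :=
  fun i j => (if i = j then (1 : ℝ) else 0) +
    ε * (if (i : ℕ) / M = (j : ℕ) / M ∧ (i : ℕ) % M + (j : ℕ) % M = M - 1 then 1 else 0)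

/-- `ℛ(P,Q) = P ⊛ (J_{2M} Q)`. -/
def Rcal {M κ : ℕ} (P Q : Matrix (Fin (2 * M)) (Fin κ) ℝ) :
    Matrix (Fin (2 * M)) (Fin (2 * κ - 1)) ℝ :=
  rowConv P (Jmat (2 * M) * Q)

/-- `𝒮(P,Q) = ((J₂ ⊗ I_M) P) ⊛ (J_{2M} Q)`. -/
def Scal {M κ : ℕ} (P Q : Matrix (Fin (2 * M)) (Fin κ) ℝ) :
    Matrix (Fin (2 * M)) (Fin (2 * κ - 1)) ℝ :=
  rowConv (swapHalves M * P) (Jmat (2 * M) * Q)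

/-- `η` with sign `ε`:
`η^ε(P,Q,R,S) = (1/(2M)) tr[U^ε ℛ(P,Q) ℛ(R,S)ᵀ + U^{-ε} 𝒮(P,Q) 𝒮(R,S)ᵀ]`.
For `ε = 1` this is the quantity `η^{(+,-)}` (with `U⁺` on `ℛ` and `U⁻` on `𝒮`);
for `ε = -1` it is `η^{(-,+)}`. -/
noncomputable def etaSign {M κ : ℕ} (ε : ℝ) (P Q R S : Matrix (Fin (2 * M)) (Fin κ) ℝ) : ℝ :=
  (1 / (2 * (M : ℝ))) *
    Matrix.trace (Umat M ε * Rcal P Q * (Rcal R S)ᵀ + Umat M (-ε) * Scal P Q * (Scal R S)ᵀ)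

/-- Arrange a pulse of length `2Mκ` into a `2M × κ` matrix column by column. -/
def toMat (M κ : ℕ) (p : Fin (2 * M * κ) → ℝ) : Matrix (Fin (2 * M)) (Fin κ) ℝ :=
  fun i k => p ⟨(k : ℕ) * (2 * M) + (i : ℕ), by
    have h1 := i.isLt
    have h2 := k.isLt
    calc (k : ℕ) * (2 * M) + (i : ℕ) < ((k : ℕ) + 1) * (2 * M) := by
          rw [Nat.add_mul, Nat.one_mul]; omega
      _ ≤ κ * (2 * M) := Nat.mul_le_mul_right _ h2
      _ = 2 * M * κ := Nat.mul_comm _ _⟩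

/-- The `2M × (2κ−1)` matrix which is zero everywhere except for its central column
(column index `κ − 1`), which is filled with ones. -/
def centralCol (M κ : ℕ) : Matrix (Fin (2 * M)) (Fin (2 * κ - 1)) ℝ :=
  fun _ k => if (k : ℕ) = κ - 1 then 1 else 0

/-- A pulse is symmetric in the time domain: `p[n] = p[2Mκ − n + 1]` (1-indexed). -/
def IsSymmetricPulse {L : ℕ} (p : Fin L → ℝ) : Prop := ∀ n : Fin L, p n = p n.rev

/-- A pulse is anti-symmetric in the time domain: `p[n] = −p[2Mκ − n + 1]` (1-indexed). -/
def IsAntisymmetricPulse {L : ℕ} (p : Fin L → ℝ) : Prop := ∀ n : Fin L, p n = -p n.rev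

lemma trace_mul_transpose' {m n : ℕ} (A B : Matrix (Fin m) (Fin n) ℝ) :
    Matrix.trace (A * Bᵀ) = ∑ i, ∑ j, A i j * B i j := by
  simp [Matrix.trace, Matrix.diag, Matrix.mul_apply]

lemma Jmat_mul_apply {m κ : ℕ} (A : Matrix (Fin m) (Fin κ) ℝ) (i : Fin m) (b : Fin κ) :
    (Jmat m * A) i b = A i.rev b := by
  simp only [Matrix.mul_apply, Jmat]
  rw [Finset.sum_eq_single i.rev]
  · have : (i : ℕ) + (i.rev : ℕ) = m - 1 := by
      have := i.isLt
      simp [Fin.val_rev]; omega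
    rw [if_pos this, one_mul]
  · intro j _ hj
    have : ¬ ((i : ℕ) + (j : ℕ) = m - 1) := by
      intro h
      apply hj
      have hi := i.isLt
      have hjj := j.isLt
      apply Fin.ext
      simp [Fin.val_rev]; omega
    rw [if_neg this, zero_mul]
  · simp

/-- collapse of the inner convolution sum at the central column -/
lemma rowConv_central {m κ : ℕ} (hκ : 0 < κ) (A B : Matrix (Fin m) (Fin κ) ℝ) (i : Fin m) :
    rowConv A B i ⟨κ - 1, by omega⟩ = ∑ a : Fin κ, A i a * B i a.rev := by
  unfold rowConv
  refine Finset.sum_congr rfl fun a _ => ?_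
  rw [Finset.sum_eq_single a.rev]
  · have : (a : ℕ) + (a.rev : ℕ) = κ - 1 := by
      have := a.isLt
      simp [Fin.val_rev]; omega
    rw [if_pos this]
  · intro b _ hb
    have : ¬ ((a : ℕ) + (b : ℕ) = κ - 1) := by
      intro h
      apply hb
      have := a.isLt
      have := b.isLt
      apply Fin.ext
      simp [Fin.val_rev]; omega
    rw [if_neg this]
  · simp

/-- If the pulses `p, q` meet the perfect reconstruction conditions (`U⁻ 𝒮(p,q) = 0` and
`U⁺ ℛ(p,q)` is zero except for an all-ones central column), and `r, s` have opposite time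
domain symmetry (one symmetric, the other anti-symmetric), then
`η^{(+,-)}(p,q,r,s) = (1/(2M)) Σ_{n=1}^{2Mκ} r[n] s[2Mκ−n+1] = 0`. -/
theorem etaSign_eq_zero_of_PR {M κ : ℕ} (hM : 0 < M) (hκ : 0 < κ)
    (p q r s : Fin (2 * M * κ) → ℝ)
    (hPR1 : Umat M (-1) * Scal (toMat M κ p) (toMat M κ q) = 0)
    (hPR2 : Umat M 1 * Rcal (toMat M κ p) (toMat M κ q) = centralCol M κ)
    (hrs : (IsSymmetricPulse r ∧ IsAntisymmetricPulse s) ∨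
           (IsAntisymmetricPulse r ∧ IsSymmetricPulse s)) :
    etaSign 1 (toMat M κ p) (toMat M κ q) (toMat M κ r) (toMat M κ s)
        = (1 / (2 * (M : ℝ))) * ∑ n : Fin (2 * M * κ), r n * s n.rev ∧
      etaSign 1 (toMat M κ p) (toMat M κ q) (toMat M κ r) (toMat M κ s) = 0 := by
  have hmain : etaSign 1 (toMat M κ p) (toMat M κ q) (toMat M κ r) (toMat M κ s)
      = (1 / (2 * (M : ℝ))) * ∑ n : Fin (2 * M * κ), r n * s n.rev := by
    unfold etaSign
    rw [hPR1, hPR2, Matrix.zero_mul, Matrix.trace_add, Matrix.trace_zero, add_zero]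
    congr 1
    -- reduce trace with centralCol
    rw [trace_mul_transpose']
    have jc : Fin (2 * κ - 1) := ⟨κ - 1, by omega⟩
    have hcol : ∀ i : Fin (2 * M), (∑ j : Fin (2 * κ - 1),
        centralCol M κ i j * Rcal (toMat M κ r) (toMat M κ s) i j)
        = Rcal (toMat M κ r) (toMat M κ s) i ⟨κ - 1, by omega⟩ := by
      intro i
      rw [Finset.sum_eq_single (⟨κ - 1, by omega⟩ : Fin (2 * κ - 1))]
      · simp [centralCol]
      · intro j _ hj
        have : ¬ ((j : ℕ) = κ - 1) := fun h => hj (Fin.ext h)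
        simp [centralCol, this]
      · simp
    rw [Finset.sum_congr rfl fun i _ => hcol i]
    -- now compute Rcal at the central column
    have hR : ∀ i : Fin (2 * M), Rcal (toMat M κ r) (toMat M κ s) i ⟨κ - 1, by omega⟩
        = ∑ a : Fin κ, toMat M κ r i a * toMat M κ s i.rev a.rev := by
      intro i
      unfold Rcal
      rw [rowConv_central hκ]
      exact Finset.sum_congr rfl fun a _ => by rw [Jmat_mul_apply]
    rw [Finset.sum_congr rfl fun i _ => hR i]
    -- identify with the pulse sum
    have hmul : κ * (2 * M) = 2 * M * κ := Nat.mul_comm _ _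
    set e : Fin κ × Fin (2 * M) ≃ Fin (2 * M * κ) :=
      finProdFinEquiv.trans (finCongr hmul) with he
    rw [← Equiv.sum_comp e (fun n => r n * s n.rev), Fintype.sum_prod_type]
    rw [Finset.sum_comm]
    refine Finset.sum_congr rfl fun a _ => Finset.sum_congr rfl fun i _ => ?_
    have hi := i.isLt
    have ha := a.isLt
    have hval : ((e (a, i)) : ℕ) = (a : ℕ) * (2 * M) + (i : ℕ) := by
      rw [he]
      simp [finProdFinEquiv, finCongr]
      ring
    have key : (κ - ((a : ℕ) + 1)) * (2 * M) + (a : ℕ) * (2 * M) + 2 * M = 2 * M * κ := by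
      have h' : (κ - ((a : ℕ) + 1)) + (a : ℕ) + 1 = κ := by omega
      calc (κ - ((a : ℕ) + 1)) * (2 * M) + (a : ℕ) * (2 * M) + 2 * M
          = ((κ - ((a : ℕ) + 1)) + (a : ℕ) + 1) * (2 * M) := by ring
        _ = κ * (2 * M) := by rw [h']
        _ = 2 * M * κ := Nat.mul_comm _ _
    have hrev : ((e (a, i)).rev : ℕ) = (a.rev : ℕ) * (2 * M) + (i.rev : ℕ) := by
      simp only [Fin.val_rev, hval]
      omega
    have h1 : r (e (a, i)) = toMat M κ r i a := by
      unfold toMat; congr 1; exact Fin.ext hval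
    have h2 : s ((e (a, i)).rev) = toMat M κ s i.rev a.rev := by
      unfold toMat; congr 1; exact Fin.ext hrev
    rw [h1, h2]
  refine ⟨hmain, ?_⟩
  rw [hmain]
  have hzero : ∑ n : Fin (2 * M * κ), r n * s n.rev = 0 := by
    have hrev : ∑ n : Fin (2 * M * κ), r n * s n.rev
        = ∑ n : Fin (2 * M * κ), r n.rev * s n := by
      rw [← Equiv.sum_comp (Fin.revPerm) (fun n => r n * s n.rev)]
      exact Finset.sum_congr rfl fun n _ => by simp [Fin.rev_rev]
    have hneg : ∑ n : Fin (2 * M * κ), r n.rev * s n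
        = - ∑ n : Fin (2 * M * κ), r n * s n.rev := by
      rw [← Finset.sum_neg_distrib]
      refine Finset.sum_congr rfl fun n _ => ?_
      rcases hrs with ⟨hr, hs⟩ | ⟨hr, hs⟩
      · have : r n.rev = r n := by rw [hr n]
        rw [this, hs n]; ring
      · have : r n.rev = -r n := by rw [hr n]; simp
        rw [this, ← hs n]; ring
    have := hrev.trans hneg
    linarith
  rw [hzero, mul_zero]
end

section
/- Let p, q, r, s be real pulses of length 2Mκ such that each is either symmetric (x[n] = x[2Mκ−n+1]) or anti-symmetric (x[n] = −x[2Mκ−n+1]), with symmetry indicator s(x) ∈ {0,1} (0 for symmetric, 1 for anti-symmetric). Then (−1)^{s(p)}[η⁺(p,q,r,s) − η⁻(p,q,r,s)] + (−1)^{s(r)}[η⁺(r,q,p,s) − η⁻(r,q,p,s)] = 0; in particular, when p = r, η⁺(p,q,p,s) = η⁻(p,q,p,s). -/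
open Matrix Finset

/-!
Only the `J_M` part of `U^±` survives in `η⁺ − η⁻`: with `σ` the reversal inside each half of
the rows and `Xσ` the matrix `X` with rows permuted by `σ`,
`η⁺ − η⁻ = (1/M) (tr(ℛ(P,Q)σ ℛ(R,S)ᵀ) − tr(𝒮(P,Q)σ 𝒮(R,S)ᵀ))`.
Each trace is a sum, over columns with `a + b = c + d`, of products of four row entries; the
substitution `a ↦ κ-1-c`, `c ↦ κ-1-a` preserves the constraint and swaps the first and third
factors. A pulse with sign `ε` arranged columnwise satisfies `P i a = ε P (2M-1-i) (κ-1-a)`, so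
the substitution turns each trace for `(P, R)` into `εp εr` times the other trace for `(R, P)`.
Thus exchanging `p` and `r` multiplies `η⁺ − η⁻` by `-εp εr`, and the relation follows from
`εp² = 1`.
-/

def halfSwap (M : ℕ) : Equiv.Perm (Fin (2 * M)) :=
  Function.Involutive.toPerm
    (fun i => ⟨if (i : ℕ) < M then i + M else i - M, by split_ifs <;> omega⟩)
    (fun i => by ext; dsimp only; split_ifs <;> omega)

lemma val_halfSwap {M : ℕ} (i : Fin (2 * M)) :
    (halfSwap M i : ℕ) = if (i : ℕ) < M then i + M else i - M := rfl

-- `I₂ ⊗ J_M` as a permutation of the rows: the reversal inside each half.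
def halfRev (M : ℕ) : Equiv.Perm (Fin (2 * M)) := (halfSwap M).trans Fin.revPerm

lemma halfRev_apply {M : ℕ} (i : Fin (2 * M)) : halfRev M i = (halfSwap M i).rev := rfl

lemma halfSwap_halfRev {M : ℕ} (i : Fin (2 * M)) : halfSwap M (halfRev M i) = i.rev := by
  ext; simp only [halfRev_apply, val_halfSwap, Fin.val_rev]
  split_ifs <;> omega

lemma Jmat_eq_permMatrix (n : ℕ) : Jmat n = (Fin.revPerm : Equiv.Perm (Fin n)).permMatrix ℝ := by
  ext i j
  simp only [Jmat, PEquiv.toMatrix_apply, Equiv.toPEquiv_apply, Option.mem_def, Option.some.injEq,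
    Fin.revPerm_apply, Fin.ext_iff, Fin.val_rev]
  congr 1; apply propext; omega

lemma swapHalves_eq_permMatrix (M : ℕ) : swapHalves M = (halfSwap M).permMatrix ℝ := by
  ext i j
  simp only [swapHalves, PEquiv.toMatrix_apply, Equiv.toPEquiv_apply, Option.mem_def,
    Option.some.injEq, Fin.ext_iff, val_halfSwap]
  congr 1; apply propext
  have := i.isLt
  split_ifs with h
  · rw [Nat.mod_eq_of_lt (by omega)]
  · rw [show (i : ℕ) + M = (i - M) + 2 * M by omega, Nat.add_mod_right, Nat.mod_eq_of_lt (by omega)]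

lemma div_mod_of_lt_two_mul {i M : ℕ} (h : i < 2 * M) :
    (i < M ∧ i / M = 0 ∧ i % M = i) ∨ (¬i < M ∧ i / M = 1 ∧ i % M = i - M) := by
  by_cases hi : i < M
  · exact Or.inl ⟨hi, Nat.div_eq_of_lt hi, Nat.mod_eq_of_lt hi⟩
  · obtain ⟨j, rfl⟩ := Nat.exists_eq_add_of_le (not_lt.mp hi)
    have hj : j < M := by omega
    refine Or.inr ⟨hi, ?_, ?_⟩
    · rw [Nat.add_div_left _ (by omega), Nat.div_eq_of_lt hj]
    · rw [Nat.add_mod_left, Nat.mod_eq_of_lt hj]; omega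

lemma halfRev_eq_iff {M : ℕ} (i j : Fin (2 * M)) :
    halfRev M i = j ↔ (i : ℕ) / M = (j : ℕ) / M ∧ (i : ℕ) % M + (j : ℕ) % M = M - 1 := by
  rw [Fin.ext_iff, halfRev_apply, Fin.val_rev, val_halfSwap]
  rcases div_mod_of_lt_two_mul i.isLt with ⟨hi, hi1, hi2⟩ | ⟨hi, hi1, hi2⟩ <;>
    rcases div_mod_of_lt_two_mul j.isLt with ⟨hj, hj1, hj2⟩ | ⟨hj, hj1, hj2⟩ <;>
    simp only [hi, hi1, hi2, hj1, hj2, if_true, if_false, true_and] <;> omega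

lemma Umat_eq (M : ℕ) (ε : ℝ) : Umat M ε = 1 + ε • (halfRev M).permMatrix ℝ := by
  ext i j
  simp only [Umat, ← halfRev_eq_iff, Matrix.add_apply, one_apply, Matrix.smul_apply, smul_eq_mul,
    PEquiv.toMatrix_apply, Equiv.toPEquiv_apply, Option.mem_def, Option.some.injEq]

lemma Jmat_mul {n κ : ℕ} (Q : Matrix (Fin n) (Fin κ) ℝ) : Jmat n * Q = Q.submatrix Fin.rev id := by
  rw [Jmat_eq_permMatrix, PEquiv.toMatrix_toPEquiv_mul]; rfl

lemma swapHalves_mul {M κ : ℕ} (P : Matrix (Fin (2 * M)) (Fin κ) ℝ) :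
    swapHalves M * P = P.submatrix (halfSwap M) id := by
  rw [swapHalves_eq_permMatrix, PEquiv.toMatrix_toPEquiv_mul]

lemma trace_Umat_mul_mul_transpose {M n : ℕ} (ε : ℝ) (X Y : Matrix (Fin (2 * M)) (Fin n) ℝ) :
    trace (Umat M ε * X * Yᵀ) = trace (X * Yᵀ) + ε * trace (X.submatrix (halfRev M) id * Yᵀ) := by
  rw [Umat_eq, Matrix.add_mul, Matrix.add_mul, Matrix.one_mul, Matrix.smul_mul, Matrix.smul_mul,
    PEquiv.toMatrix_toPEquiv_mul, trace_add, trace_smul, smul_eq_mul]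

lemma etaSign_one_sub_etaSign_neg_one {M κ : ℕ} (P Q R S : Matrix (Fin (2 * M)) (Fin κ) ℝ) :
    etaSign 1 P Q R S - etaSign (-1) P Q R S
      = 1 / M * (trace ((Rcal P Q).submatrix (halfRev M) id * (Rcal R S)ᵀ)
          - trace ((Scal P Q).submatrix (halfRev M) id * (Scal R S)ᵀ)) := by
  simp only [etaSign, trace_add, trace_Umat_mul_mul_transpose]
  ring

lemma sum_ite_val_eq {M : Type*} [AddCommMonoid M] {N x : ℕ} (hx : x < N) (F : Fin N → M) :
    ∑ k : Fin N, (if x = (k : ℕ) then F k else 0) = F ⟨x, hx⟩ := by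
  have hiff : ∀ k : Fin N, x = (k : ℕ) ↔ ⟨x, hx⟩ = k := fun k => by rw [Fin.ext_iff]
  simp only [hiff, sum_ite_eq, mem_univ, if_true]

lemma sum_four_rev_swap {β : Type*} [AddCommMonoid β] {κ : ℕ}
    (F : Fin κ → Fin κ → Fin κ → Fin κ → β) :
    ∑ a, ∑ b, ∑ c, ∑ d, F a b c d = ∑ a, ∑ b, ∑ c, ∑ d, F (Fin.rev c) b (Fin.rev a) d := by
  calc ∑ a, ∑ b, ∑ c, ∑ d, F a b c d
      = ∑ c, ∑ b, ∑ a, ∑ d, F (Fin.rev c) b (Fin.rev a) d := by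
        rw [← Equiv.sum_comp Fin.revPerm]
        refine sum_congr rfl fun c _ => sum_congr rfl fun b _ => ?_
        rw [← Equiv.sum_comp Fin.revPerm]
        rfl
    _ = ∑ c, ∑ a, ∑ b, ∑ d, F (Fin.rev c) b (Fin.rev a) d := sum_congr rfl fun _ _ => sum_comm
    _ = ∑ a, ∑ c, ∑ b, ∑ d, F (Fin.rev c) b (Fin.rev a) d := sum_comm
    _ = ∑ a, ∑ b, ∑ c, ∑ d, F (Fin.rev c) b (Fin.rev a) d := sum_congr rfl fun _ _ => sum_comm

lemma sum_rowConv_mul {m κ : ℕ} (A B : Matrix (Fin m) (Fin κ) ℝ) (i : Fin m)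
    (Y : Fin (2 * κ - 1) → ℝ) :
    ∑ k, rowConv A B i k * Y k
      = ∑ a, ∑ b, A i a * B i b * Y ⟨a + b, by have := a.isLt; have := b.isLt; omega⟩ := by
  simp only [rowConv, sum_mul, ite_mul, zero_mul]
  rw [sum_comm]
  refine sum_congr rfl fun a _ => ?_
  rw [sum_comm]
  exact sum_congr rfl fun b _ => sum_ite_val_eq _ _

lemma trace_rowConv_mul_transpose {m κ : ℕ} (A B C D : Matrix (Fin m) (Fin κ) ℝ) :
    trace (rowConv A B * (rowConv C D)ᵀ)
      = ∑ i, ∑ a : Fin κ, ∑ b : Fin κ, ∑ c : Fin κ, ∑ d : Fin κ,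
          if (c : ℕ) + d = a + b then A i a * B i b * (C i c * D i d) else 0 := by
  simp only [trace, Matrix.diag, mul_apply, transpose_apply, sum_rowConv_mul]
  simp only [rowConv, mul_sum, mul_ite, mul_zero]

lemma trace_rowConv_mul_transpose_rev {m κ : ℕ} {A B C D A' C' : Matrix (Fin m) (Fin κ) ℝ}
    {ε δ : ℝ} (hA : ∀ i a, A' i a = ε * A i a.rev) (hC : ∀ i c, C' i c = δ * C i c.rev) :
    trace (rowConv A' B * (rowConv C' D)ᵀ) = ε * δ * trace (rowConv C B * (rowConv A D)ᵀ) := by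
  rw [trace_rowConv_mul_transpose, trace_rowConv_mul_transpose, mul_sum]
  refine sum_congr rfl fun i _ => ?_
  rw [sum_four_rev_swap]
  simp only [mul_sum]
  refine sum_congr rfl fun a _ => sum_congr rfl fun b _ => sum_congr rfl fun c _ =>
    sum_congr rfl fun d _ => ?_
  rw [hA, hC, Fin.rev_rev, Fin.rev_rev]
  have := a.isLt; have := c.isLt
  simp only [Fin.val_rev]
  split_ifs <;> first | omega | ring

lemma rowConv_submatrix {m m' κ : ℕ} (A B : Matrix (Fin m) (Fin κ) ℝ) (f : Fin m' → Fin m) :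
    (rowConv A B).submatrix f id = rowConv (A.submatrix f id) (B.submatrix f id) := rfl

lemma Rcal_eq_rowConv {M κ : ℕ} (P Q : Matrix (Fin (2 * M)) (Fin κ) ℝ) :
    Rcal P Q = rowConv P (Q.submatrix Fin.rev id) := by
  rw [Rcal, Jmat_mul]

lemma Scal_eq_rowConv {M κ : ℕ} (P Q : Matrix (Fin (2 * M)) (Fin κ) ℝ) :
    Scal P Q = rowConv (P.submatrix (halfSwap M) id) (Q.submatrix Fin.rev id) := by
  rw [Scal, Jmat_mul, swapHalves_mul]

lemma Rcal_submatrix_halfRev {M κ : ℕ} (P Q : Matrix (Fin (2 * M)) (Fin κ) ℝ) :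
    (Rcal P Q).submatrix (halfRev M) id
      = rowConv (P.submatrix (halfRev M) id) (Q.submatrix (halfSwap M) id) := by
  rw [Rcal_eq_rowConv, rowConv_submatrix, submatrix_submatrix]
  congr 2
  ext i
  simp only [Function.comp_apply, halfRev_apply, Fin.rev_rev]

lemma Scal_submatrix_halfRev {M κ : ℕ} (P Q : Matrix (Fin (2 * M)) (Fin κ) ℝ) :
    (Scal P Q).submatrix (halfRev M) id
      = rowConv (P.submatrix Fin.rev id) (Q.submatrix (halfSwap M) id) := by
  rw [Scal_eq_rowConv, rowConv_submatrix, submatrix_submatrix, submatrix_submatrix]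
  congr 2 <;> ext i
  · simp only [Function.comp_apply, halfSwap_halfRev]
  · simp only [Function.comp_apply, halfRev_apply, Fin.rev_rev]

lemma etaSign_sub_eq_neg_mul_etaSign_sub {M κ : ℕ} {P R : Matrix (Fin (2 * M)) (Fin κ) ℝ}
    {εp εr : ℝ} (hP : ∀ i a, P i a = εp * P i.rev a.rev) (hR : ∀ i a, R i a = εr * R i.rev a.rev)
    (Q S : Matrix (Fin (2 * M)) (Fin κ) ℝ) :
    etaSign 1 P Q R S - etaSign (-1) P Q R S
      = -(εp * εr) * (etaSign 1 R Q P S - etaSign (-1) R Q P S) := by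
  simp only [etaSign_one_sub_etaSign_neg_one, Rcal_submatrix_halfRev, Scal_submatrix_halfRev]
  simp only [Rcal_eq_rowConv, Scal_eq_rowConv]
  rw [trace_rowConv_mul_transpose_rev (A := P.submatrix (halfSwap M) id)
      (C := R.submatrix Fin.rev id)
      (fun i a => by simpa [halfRev_apply] using hP (halfRev M i) a) hR,
    trace_rowConv_mul_transpose_rev (A' := P.submatrix Fin.rev id) (A := P)
      (C' := R.submatrix (halfSwap M) id) (C := R.submatrix (halfRev M) id)
      (fun i a => by simpa using hP i.rev a) (fun i a => hR (halfSwap M i) a)]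
  ring

lemma toMat_apply_eq_mul_rev_rev {M κ : ℕ} {p : Fin (2 * M * κ) → ℝ} {ε : ℝ}
    (hp : ∀ n, p n = ε * p n.rev) (i : Fin (2 * M)) (a : Fin κ) :
    toMat M κ p i a = ε * toMat M κ p i.rev a.rev := by
  rw [toMat, hp]
  congr 2
  ext
  obtain ⟨t, ht⟩ := Nat.exists_eq_add_of_lt a.isLt
  have hi := i.isLt
  simp only [Fin.val_rev, ht]
  rw [show a + t + 1 - (a + 1) = t by omega]
  have h1 : 2 * M * (a + t + 1) = a * (2 * M) + t * (2 * M) + 2 * M := by ring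
  omega

theorem etaSign_symmetry_relation_general {M κ : ℕ}
    (p q r s : Fin (2 * M * κ) → ℝ) (εp εr : ℝ)
    (hεp : εp = 1 ∨ εp = -1)
    (hp : ∀ n : Fin (2 * M * κ), p n = εp * p n.rev)
    (hr : ∀ n : Fin (2 * M * κ), r n = εr * r n.rev) :
    εp * (etaSign 1 (toMat M κ p) (toMat M κ q) (toMat M κ r) (toMat M κ s)
            - etaSign (-1) (toMat M κ p) (toMat M κ q) (toMat M κ r) (toMat M κ s))
      + εr * (etaSign 1 (toMat M κ r) (toMat M κ q) (toMat M κ p) (toMat M κ s)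
            - etaSign (-1) (toMat M κ r) (toMat M κ q) (toMat M κ p) (toMat M κ s)) = 0 ∧
    (p = r →
      etaSign 1 (toMat M κ p) (toMat M κ q) (toMat M κ r) (toMat M κ s)
        = etaSign (-1) (toMat M κ p) (toMat M κ q) (toMat M κ r) (toMat M κ s)) := by
  have hεp_sq : εp * εp = 1 := by rcases hεp with rfl | rfl <;> norm_num
  have hP := toMat_apply_eq_mul_rev_rev hp
  refine ⟨?_, fun hpr => ?_⟩
  · have hsign : εp * -(εp * εr) = -εr := by linear_combination -εr * hεp_sq
    rw [etaSign_sub_eq_neg_mul_etaSign_sub hP (toMat_apply_eq_mul_rev_rev hr), ← mul_assoc, hsign]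
    ring
  · subst hpr
    have key := etaSign_sub_eq_neg_mul_etaSign_sub hP hP (toMat M κ q) (toMat M κ s)
    rw [hεp_sq] at key
    linarith

/-- If each of the pulses `p, q, r, s` is either symmetric or anti-symmetric in the time
domain, with sign factors `εp = (−1)^{s(p)}` etc. (`+1` for symmetric, `−1` for
anti-symmetric), then
`(−1)^{s(p)}[η⁺(p,q,r,s) − η⁻(p,q,r,s)] + (−1)^{s(r)}[η⁺(r,q,p,s) − η⁻(r,q,p,s)] = 0`;
in particular, when `p = r`, `η⁺(p,q,p,s) = η⁻(p,q,p,s)`. -/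
theorem etaSign_symmetry_relation {M κ : ℕ}
    (p q r s : Fin (2 * M * κ) → ℝ) (εp εq εr εs : ℝ)
    (hεp : εp = 1 ∨ εp = -1) (hεq : εq = 1 ∨ εq = -1)
    (hεr : εr = 1 ∨ εr = -1) (hεs : εs = 1 ∨ εs = -1)
    (hp : ∀ n : Fin (2 * M * κ), p n = εp * p n.rev)
    (hq : ∀ n : Fin (2 * M * κ), q n = εq * q n.rev)
    (hr : ∀ n : Fin (2 * M * κ), r n = εr * r n.rev)
    (hs : ∀ n : Fin (2 * M * κ), s n = εs * s n.rev) :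
    εp * (etaSign 1 (toMat M κ p) (toMat M κ q) (toMat M κ r) (toMat M κ s)
            - etaSign (-1) (toMat M κ p) (toMat M κ q) (toMat M κ r) (toMat M κ s))
      + εr * (etaSign 1 (toMat M κ r) (toMat M κ q) (toMat M κ p) (toMat M κ s)
            - etaSign (-1) (toMat M κ r) (toMat M κ q) (toMat M κ p) (toMat M κ s)) = 0 ∧
    (p = r →
      etaSign 1 (toMat M κ p) (toMat M κ q) (toMat M κ r) (toMat M κ s)
        = etaSign (-1) (toMat M κ p) (toMat M κ q) (toMat M κ r) (toMat M κ s)) :=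
  etaSign_symmetry_relation_general p q r s εp εr hεp hp hr
end
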